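/- arXiv:1808.03580 — 5 statements merged into one kernel-verified Lean document; each statement's English description precedes it below -/
import Mathlib

section
/- Let q be a prime power and let v ≥ 1 and 2 ≤ d ≤ v be integers such that ⌈d/2⌉ divides v. Then A_q(v,d) ≤ Σ_{i=⌈d/2⌉}^{v−⌈d/2⌉} A_q(v, 2⌈d/2⌉; i). -/
open scoped Classical

/-- The subspace distance `d_S(X,Y) = dim(X+Y) - dim(X∩Y)` between two subspaces. -/
noncomputable def subspaceDist {F V : Type*} [Field F] [AddCommGroup V] [Module F V]
    (X Y : Submodule F V) : ℕ :=
  Module.finrank F ↥(X ⊔ Y) - Module.finrank F ↥(X ⊓ Y)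

/-- `C` is a subspace code with minimum subspace distance at least `d`. -/
def IsSubspaceCode {F V : Type*} [Field F] [AddCommGroup V] [Module F V]
    (d : ℕ) (C : Finset (Submodule F V)) : Prop :=
  ∀ X ∈ C, ∀ Y ∈ C, X ≠ Y → d ≤ subspaceDist X Y

/-- `A_q(v,d)`: the maximum cardinality of a subspace code in `F^v` (where `#F = q`)
with minimum subspace distance at least `d`. -/
noncomputable def maxCode (F : Type*) [Field F] [Fintype F] (v d : ℕ) : ℕ :=
  sSup {n | ∃ C : Finset (Submodule F (Fin v → F)), IsSubspaceCode d C ∧ C.card = n}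

/-- `A_q(v,d;k)`: the maximum cardinality of a constant dimension code in `F^v`
(where `#F = q`) with minimum subspace distance at least `d` and all codewords of
dimension `k`. -/
noncomputable def maxCodeDim (F : Type*) [Field F] [Fintype F] (v d k : ℕ) : ℕ :=
  sSup {n | ∃ C : Finset (Submodule F (Fin v → F)), IsSubspaceCode d C ∧
    (∀ X ∈ C, Module.finrank F ↥X = k) ∧ C.card = n}

/-- `[x]_q = (q^x - 1)/(q - 1)`, the number of points of `PG(F_q^x)`. -/
def gaussNum (q x : ℕ) : ℕ := ∑ i ∈ Finset.range x, q ^ i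

/-!
Put `t = ⌈d/2⌉`, so `d ≥ 2t - 1`. Distances between subspaces of equal dimension are even, hence
each dimension layer of a code of distance `d` is a constant dimension code of distance `2t`. At
most one codeword has dimension `< t`, and such a codeword `U` is disjoint from every
`t`-dimensional one, so the `t`-dimensional codewords form a partial spread missing the
`q^dim U - 1 > 0` nonzero vectors of `U`. Counting points against a Desarguesian spread (the
`𝔽_{q^t}`-lines of `𝔽_{q^t}^{v/t}`, available because `t ∣ v`) shows that an optimal code of
`t`-subspaces has room for one more member, so `U` can be charged to layer `t`. Dually, via
annihilators, a codeword of dimension `> v - t` is charged to layer `v - t`. When `v = 2t` both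
may occur; counting the points of the large one outside the `t`-dimensional codewords then
leaves room for two.
-/

open Module Finset

section Distance

variable {F V : Type*} [Field F] [AddCommGroup V] [Module F V]

theorem subspaceDist_add_two_mul_finrank_inf (X Y : Submodule F V)
    [FiniteDimensional F X] [FiniteDimensional F Y] :
    subspaceDist X Y + 2 * finrank F ↥(X ⊓ Y) = finrank F X + finrank F Y := by
  have := Submodule.finrank_sup_add_finrank_inf_eq X Y
  have := Submodule.finrank_mono (inf_le_left.trans le_sup_left : X ⊓ Y ≤ X ⊔ Y)
  unfold subspaceDist
  omega

theorem subspaceDist_add_finrank_add_finrank (X Y : Submodule F V)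
    [FiniteDimensional F X] [FiniteDimensional F Y] :
    subspaceDist X Y + finrank F X + finrank F Y = 2 * finrank F ↥(X ⊔ Y) := by
  have := Submodule.finrank_sup_add_finrank_inf_eq X Y
  have := Submodule.finrank_mono (inf_le_left.trans le_sup_left : X ⊓ Y ≤ X ⊔ Y)
  unfold subspaceDist
  omega

theorem subspaceDist_of_disjoint {X Y : Submodule F V}
    [FiniteDimensional F X] [FiniteDimensional F Y] (h : Disjoint X Y) :
    subspaceDist X Y = finrank F X + finrank F Y := by
  have := subspaceDist_add_two_mul_finrank_inf X Y
  rw [h.eq_bot, finrank_bot] at this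
  omega

theorem disjoint_of_finrank_add_le_subspaceDist {X Y : Submodule F V}
    [FiniteDimensional F X] [FiniteDimensional F Y]
    (h : finrank F X + finrank F Y ≤ subspaceDist X Y + 1) : Disjoint X Y := by
  have := subspaceDist_add_two_mul_finrank_inf X Y
  rw [disjoint_iff, ← Submodule.finrank_eq_zero]
  omega

theorem subspaceDist_map_equiv {W : Type*} [AddCommGroup W] [Module F W] (e : V ≃ₗ[F] W)
    (X Y : Submodule F V) :
    subspaceDist (X.map (e : V →ₗ[F] W)) (Y.map (e : V →ₗ[F] W)) = subspaceDist X Y := by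
  unfold subspaceDist
  rw [← Submodule.map_sup, ← Submodule.map_inf _ e.injective, LinearEquiv.finrank_map_eq,
    LinearEquiv.finrank_map_eq]

theorem subspaceDist_dualAnnihilator [FiniteDimensional F V] (X Y : Submodule F V) :
    subspaceDist X.dualAnnihilator Y.dualAnnihilator = subspaceDist X Y := by
  unfold subspaceDist
  rw [← Subspace.dualAnnihilator_inf_eq, ← Submodule.dualAnnihilator_sup_eq]
  have := Subspace.finrank_add_finrank_dualAnnihilator_eq (X ⊔ Y)
  have := Subspace.finrank_add_finrank_dualAnnihilator_eq (X ⊓ Y)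
  have := Submodule.finrank_mono (inf_le_left.trans le_sup_left : X ⊓ Y ≤ X ⊔ Y)
  omega

theorem IsSubspaceCode.image_map_equiv {W : Type*} [AddCommGroup W] [Module F W]
    (e : V ≃ₗ[F] W) {d : ℕ} {C : Finset (Submodule F V)} (hC : IsSubspaceCode d C) :
    IsSubspaceCode d (C.image (Submodule.map (e : V →ₗ[F] W))) := by
  simp only [IsSubspaceCode, mem_image]
  rintro _ ⟨X, hX, rfl⟩ _ ⟨Y, hY, rfl⟩ hne
  rw [subspaceDist_map_equiv]
  exact hC X hX Y hY (ne_of_apply_ne _ hne)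

theorem IsSubspaceCode.image_dualAnnihilator [FiniteDimensional F V] {d : ℕ}
    {C : Finset (Submodule F V)} (hC : IsSubspaceCode d C) :
    IsSubspaceCode d (C.image Submodule.dualAnnihilator) := by
  simp only [IsSubspaceCode, mem_image]
  rintro _ ⟨X, hX, rfl⟩ _ ⟨Y, hY, rfl⟩ hne
  rw [subspaceDist_dualAnnihilator]
  exact hC X hX Y hY (ne_of_apply_ne _ hne)

theorem IsSubspaceCode.of_pairwiseDisjoint [FiniteDimensional F V] {S : Finset (Submodule F V)}
    {t : ℕ} (hS : (S : Set (Submodule F V)).PairwiseDisjoint id)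
    (hSt : ∀ X ∈ S, finrank F X = t) : IsSubspaceCode (2 * t) S := fun X hX Y hY hne ↦ by
  rw [subspaceDist_of_disjoint (X := X) (Y := Y) (hS hX hY hne), hSt X hX, hSt Y hY, two_mul]

end Distance

section Extremal

variable {F : Type*} [Field F] [Fintype F] {v d k : ℕ}

theorem card_le_maxCodeDim {V : Type*} [AddCommGroup V] [Module F V] [FiniteDimensional F V]
    (hV : finrank F V = v) {C : Finset (Submodule F V)} (hC : IsSubspaceCode d C)
    (hk : ∀ X ∈ C, finrank F X = k) : #C ≤ maxCodeDim F v d k := by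
  let e : V ≃ₗ[F] (Fin v → F) := LinearEquiv.ofFinrankEq _ _ (by simp [hV])
  have hbdd : BddAbove {n | ∃ C : Finset (Submodule F (Fin v → F)), IsSubspaceCode d C ∧
      (∀ X ∈ C, finrank F X = k) ∧ #C = n} :=
    ⟨Nat.card (Submodule F (Fin v → F)), by
      rintro _ ⟨C, -, -, rfl⟩
      simpa [Nat.card_eq_fintype_card] using C.card_le_univ⟩
  rw [← card_image_of_injective C (Submodule.map_injective_of_injective e.injective)]
  refine le_csSup hbdd ⟨_, hC.image_map_equiv e, ?_, rfl⟩
  simp only [mem_image]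
  rintro _ ⟨X, hX, rfl⟩
  rw [LinearEquiv.finrank_map_eq, hk X hX]

theorem maxCode_le {m : ℕ}
    (h : ∀ C : Finset (Submodule F (Fin v → F)), IsSubspaceCode d C → #C ≤ m) :
    maxCode F v d ≤ m :=
  csSup_le ⟨0, ∅, by simp [IsSubspaceCode]⟩ (by rintro _ ⟨C, hC, rfl⟩; exact h C hC)

theorem maxCodeDim_le_maxCodeDim_sub : maxCodeDim F v d k ≤ maxCodeDim F v d (v - k) := by
  refine csSup_le ⟨0, ∅, by simp [IsSubspaceCode]⟩ ?_
  rintro _ ⟨C, hC, hk, rfl⟩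
  rw [← card_image_of_injective C fun _ _ ↦ Subspace.dualAnnihilator_inj.mp]
  refine card_le_maxCodeDim (by simp) hC.image_dualAnnihilator ?_
  simp only [mem_image]
  rintro _ ⟨X, hX, rfl⟩
  have := Subspace.finrank_add_finrank_dualAnnihilator_eq X
  simp only [hk X hX, finrank_fin_fun] at this
  omega

end Extremal

theorem sum_pow_finrank_sub_one_of_forall_finrank_eq {F V : Type*} [Field F] [AddCommGroup V]
    [Module F V] {S : Finset (Submodule F V)} {q t : ℕ} (hSt : ∀ X ∈ S, finrank F X = t) :
    ∑ X ∈ S, (q ^ finrank F X - 1) = #S * (q ^ t - 1) := by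
  rw [sum_congr rfl fun X hX ↦ by rw [hSt X hX], sum_const, smul_eq_mul]

theorem notMem_and_pairwiseDisjoint_insert {α : Type*} [DecidableEq α] [PartialOrder α]
    [OrderBot α] {S : Finset α} (hS : (S : Set α).PairwiseDisjoint id) {u : α} (hu : u ≠ ⊥)
    (huS : ∀ x ∈ S, Disjoint u x) :
    u ∉ S ∧ ((insert u S : Finset α) : Set α).PairwiseDisjoint id :=
  ⟨fun h ↦ hu (disjoint_self.mp (huS u h)),
    by rw [coe_insert]; exact hS.insert fun x hx _ ↦ huS x hx⟩

theorem card_filter_le_eq_card_filter_lt_add {α : Type*} (s : Finset α) (f : α → ℕ) (t : ℕ) :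
    #{x ∈ s | f x ≤ t} = #{x ∈ s | f x < t} + #{x ∈ s | f x = t} := by
  rw [← card_union_of_disjoint (disjoint_filter.mpr fun _ _ h ↦ h.ne), ← filter_or]
  simp only [le_iff_lt_or_eq]

section Counting

variable {F V : Type*} [Field F] [AddCommGroup V] [Module F V] [Fintype V]

noncomputable def nonzeroVecs (X : Submodule F V) : Finset V := {x | x ∈ X ∧ x ≠ 0}

theorem mem_nonzeroVecs {X : Submodule F V} {x : V} : x ∈ nonzeroVecs X ↔ x ∈ X ∧ x ≠ 0 := by
  simp [nonzeroVecs]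

theorem nonzeroVecs_inf (X Y : Submodule F V) :
    nonzeroVecs (X ⊓ Y) = nonzeroVecs X ∩ nonzeroVecs Y := by
  ext x
  simp only [mem_inter, mem_nonzeroVecs, Submodule.mem_inf]
  tauto

theorem disjoint_nonzeroVecs {X Y : Submodule F V} (h : Disjoint X Y) :
    Disjoint (nonzeroVecs X) (nonzeroVecs Y) := by
  rw [Finset.disjoint_iff_inter_eq_empty, ← nonzeroVecs_inf, h.eq_bot]
  ext x
  simp [mem_nonzeroVecs]

theorem nonzeroVecs_subset_top (X : Submodule F V) :
    nonzeroVecs X ⊆ nonzeroVecs (⊤ : Submodule F V) := fun _ hx ↦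
  mem_nonzeroVecs.mpr ⟨Submodule.mem_top, (mem_nonzeroVecs.mp hx).2⟩

variable [Fintype F]

theorem card_nonzeroVecs (X : Submodule F V) :
    #(nonzeroVecs X) = Fintype.card F ^ finrank F X - 1 := by
  have hX : nonzeroVecs X = ({x | x ∈ X} : Finset V).erase 0 := by
    ext x
    simp [mem_nonzeroVecs, and_comm]
  rw [hX, card_erase_of_mem (by simp), ← Fintype.card_subtype, ← card_eq_pow_finrank]

theorem card_nonzeroVecs_top :
    #(nonzeroVecs (⊤ : Submodule F V)) = Fintype.card F ^ finrank F V - 1 := by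
  rw [card_nonzeroVecs, finrank_top]

/-- Counts the nonzero vectors of `L ∪ ⋃ S`: the only overlaps are the `L ∩ X`. -/
theorem sum_card_add_le_of_pairwiseDisjoint {S : Finset (Submodule F V)}
    (hS : (S : Set (Submodule F V)).PairwiseDisjoint id) (L : Submodule F V) :
    ∑ X ∈ S, (Fintype.card F ^ finrank F X - 1) + (Fintype.card F ^ finrank F L - 1) ≤
      Fintype.card F ^ finrank F V - 1 +
        ∑ X ∈ S, (Fintype.card F ^ finrank F ↥(L ⊓ X) - 1) := by
  set B := S.biUnion nonzeroVecs
  have hB : #B = ∑ X ∈ S, (Fintype.card F ^ finrank F X - 1) := by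
    rw [card_biUnion (t := nonzeroVecs) fun X hX Y hY hne ↦ disjoint_nonzeroVecs (hS hX hY hne)]
    exact sum_congr rfl fun X _ ↦ card_nonzeroVecs X
  have hunion : #(nonzeroVecs L ∪ B) ≤ Fintype.card F ^ finrank F V - 1 := by
    rw [← card_nonzeroVecs_top]
    refine card_le_card (union_subset (nonzeroVecs_subset_top L) ?_)
    exact biUnion_subset.mpr fun X _ ↦ nonzeroVecs_subset_top X
  have hinter : #(nonzeroVecs L ∩ B) ≤
      ∑ X ∈ S, (Fintype.card F ^ finrank F ↥(L ⊓ X) - 1) := by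
    rw [inter_biUnion]
    simp only [← nonzeroVecs_inf]
    exact card_biUnion_le.trans (sum_le_sum fun X _ ↦ (card_nonzeroVecs _).le)
  have := card_union_add_card_inter (nonzeroVecs L) B
  rw [card_nonzeroVecs, hB] at this
  omega

theorem sum_card_le_of_pairwiseDisjoint {S : Finset (Submodule F V)}
    (hS : (S : Set (Submodule F V)).PairwiseDisjoint id) :
    ∑ X ∈ S, (Fintype.card F ^ finrank F X - 1) ≤ Fintype.card F ^ finrank F V - 1 := by
  have hbot : ∑ X ∈ S, (Fintype.card F ^ finrank F ↥((⊥ : Submodule F V) ⊓ X) - 1) = 0 :=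
    sum_eq_zero fun X _ ↦ by
      rw [Submodule.finrank_eq_zero.mpr (bot_inf_eq _), pow_zero, Nat.sub_self]
  simpa [hbot] using sum_card_add_le_of_pairwiseDisjoint hS ⊥

theorem pow_finrank_sub_one_le_sum_of_forall_mem {S : Finset (Submodule F V)}
    (hS : ∀ x : V, x ≠ 0 → ∃ X ∈ S, x ∈ X) :
    Fintype.card F ^ finrank F V - 1 ≤ ∑ X ∈ S, (Fintype.card F ^ finrank F X - 1) := by
  rw [← card_nonzeroVecs_top, ← sum_congr rfl fun X _ ↦ card_nonzeroVecs X]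
  refine (card_le_card fun x hx ↦ ?_).trans card_biUnion_le
  obtain ⟨X, hXS, hxX⟩ := hS x (mem_nonzeroVecs.mp hx).2
  exact mem_biUnion.mpr ⟨X, hXS, mem_nonzeroVecs.mpr ⟨hxX, (mem_nonzeroVecs.mp hx).2⟩⟩

end Counting

section PartialSpread

variable {F V : Type*} [Field F] [Fintype F] [AddCommGroup V] [Module F V] [Fintype V]
  {S : Finset (Submodule F V)} {t N : ℕ}

theorem one_lt_pow_finrank {U : Submodule F V} (hU : U ≠ ⊥) :
    1 < Fintype.card F ^ finrank F U :=
  Nat.one_lt_pow (Submodule.finrank_eq_zero.not.mpr hU) Fintype.one_lt_card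

theorem card_lt_of_disjoint_of_pow_sub_one_le (hS : (S : Set (Submodule F V)).PairwiseDisjoint id)
    (hSt : ∀ X ∈ S, finrank F X = t) {U : Submodule F V} (hU : U ≠ ⊥)
    (hUS : ∀ X ∈ S, Disjoint U X)
    (hN : Fintype.card F ^ finrank F V - 1 ≤ N * (Fintype.card F ^ t - 1)) : #S < N := by
  obtain ⟨hUS', hpd⟩ := notMem_and_pairwiseDisjoint_insert hS hU hUS
  have hcount := sum_card_le_of_pairwiseDisjoint hpd
  rw [sum_insert hUS', sum_pow_finrank_sub_one_of_forall_finrank_eq hSt] at hcount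
  have := one_lt_pow_finrank hU
  exact Nat.lt_of_mul_lt_mul_right (a := Fintype.card F ^ t - 1) (by omega)

theorem card_lt_pow_of_disjoint_of_finrank_inf_le_one
    (hS : (S : Set (Submodule F V)).PairwiseDisjoint id) (hSt : ∀ X ∈ S, finrank F X = t)
    (hV : finrank F V = 2 * t) {U L : Submodule F V} (hU : U ≠ ⊥) (hUS : ∀ X ∈ S, Disjoint U X)
    (hLU : Disjoint L U) (hL : finrank F L = t + 1)
    (hLS : ∀ X ∈ S, finrank F ↥(L ⊓ X) ≤ 1) : #S < Fintype.card F ^ t := by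
  obtain ⟨hUS', hpd⟩ := notMem_and_pairwiseDisjoint_insert hS hU hUS
  have hcount := sum_card_add_le_of_pairwiseDisjoint hpd L
  rw [sum_insert hUS', sum_insert hUS', hLU.eq_bot, finrank_bot, pow_zero, Nat.sub_self,
    zero_add, sum_pow_finrank_sub_one_of_forall_finrank_eq hSt, hL, pow_succ, hV, two_mul,
    pow_add] at hcount
  have hUpos := one_lt_pow_finrank hU
  set q := Fintype.card F
  have hmeet : ∑ X ∈ S, (q ^ finrank F ↥(L ⊓ X) - 1) ≤ #S * (q - 1) := by
    refine (sum_le_sum fun X hX ↦ ?_).trans_eq (by rw [sum_const, smul_eq_mul])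
    exact Nat.sub_le_sub_right
      ((Nat.pow_le_pow_right Fintype.card_pos (hLS X hX)).trans_eq (pow_one q)) 1
  have ht : t ≠ 0 := by
    rintro rfl
    exact hU (Submodule.finrank_eq_zero.mp (by have := Submodule.finrank_le U; omega))
  have hq : 1 ≤ q := Fintype.card_pos
  have hqQ : q ≤ q ^ t := Nat.le_self_pow ht q
  have hQQ : 1 ≤ q ^ t * q ^ t := Nat.one_le_iff_ne_zero.mpr (by positivity)
  have hQq : 1 ≤ q ^ t * q := Nat.one_le_iff_ne_zero.mpr (by positivity)
  by_contra! hQS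
  zify [hq, hq.trans hqQ, hUpos.le, hQQ, hQq] at hcount hmeet hQS hqQ
  nlinarith [mul_le_mul_of_nonneg_right hQS (sub_nonneg.mpr hqQ)]

end PartialSpread

section Spread

theorem disjoint_span_singleton_of_ne {K W : Type*} [Field K] [AddCommGroup W] [Module K W]
    {x y : W} (hx : x ≠ 0) (hy : y ≠ 0) (h : K ∙ x ≠ K ∙ y) : Disjoint (K ∙ x) (K ∙ y) := by
  refine (Submodule.disjoint_span_singleton' hy).mpr fun hyx ↦ h (Eq.symm ?_)
  refine Submodule.eq_of_le_of_finrank_eq ((Submodule.span_singleton_le_iff_mem y _).mpr hyx) ?_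
  rw [finrank_span_singleton hx, finrank_span_singleton hy]

theorem finrank_restrictScalars_span_singleton {F K W : Type*} [Field F] [Field K] [Algebra F K]
    [AddCommGroup W] [Module K W] [Module F W] [IsScalarTower F K W] {x : W} (hx : x ≠ 0) :
    finrank F ((K ∙ x).restrictScalars F) = finrank F K := by
  rw [((Submodule.restrictScalarsEquiv F K W (K ∙ x)).restrictScalars F).finrank_eq,
    ← Module.finrank_mul_finrank F K, finrank_span_singleton hx, mul_one]

/-- The witness is the Desarguesian spread: the `K`-lines of `K^s`, for `K/F` of degree `t`. -/
theorem pow_sub_one_le_maxCodeDim_mul {F : Type*} [Field F] [Fintype F] {v t : ℕ} (ht : t ≠ 0)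
    (htv : t ∣ v) :
    Fintype.card F ^ v - 1 ≤ maxCodeDim F v (2 * t) t * (Fintype.card F ^ t - 1) := by
  obtain ⟨s, rfl⟩ := htv
  have : Fact (ringChar F).Prime := ⟨(FiniteField.card F (ringChar F)).choose_spec.1⟩
  have : NeZero t := ⟨ht⟩
  let K := FiniteField.Extension F (ringChar F) t
  have hK : finrank F K = t := FiniteField.finrank_extension F _ t
  let : Fintype K := Fintype.ofFinite K
  have hW : finrank F (Fin s → K) = t * s := by
    rw [finrank_pi_fintype]
    simp [hK, mul_comm]
  let line (x : Fin s → K) : Submodule F (Fin s → K) := (K ∙ x).restrictScalars F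
  let D : Finset (Submodule F (Fin s → K)) := ({x | x ≠ 0} : Finset (Fin s → K)).image line
  have hDt : ∀ X ∈ D, finrank F X = t := by
    simp only [D, mem_image, mem_filter, mem_univ, true_and]
    rintro _ ⟨x, hx, rfl⟩
    exact (finrank_restrictScalars_span_singleton hx).trans hK
  have hD : (D : Set (Submodule F (Fin s → K))).PairwiseDisjoint id := by
    simp only [D, coe_image, coe_filter, mem_univ, true_and]
    rintro _ ⟨x, hx, rfl⟩ _ ⟨y, hy, rfl⟩ hne
    simp only [id, line, disjoint_iff, ← Submodule.restrictScalars_inf,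
      Submodule.restrictScalars_eq_bot_iff] at hne ⊢
    exact (disjoint_span_singleton_of_ne hx hy fun h ↦ hne (by rw [h])).eq_bot
  have hcover (x : Fin s → K) (hx : x ≠ 0) : ∃ X ∈ D, x ∈ X :=
    ⟨line x, mem_image_of_mem _ (by simpa using hx), Submodule.mem_span_singleton_self x⟩
  calc Fintype.card F ^ (t * s) - 1
      ≤ ∑ X ∈ D, (Fintype.card F ^ finrank F X - 1) := by
        simpa [hW] using pow_finrank_sub_one_le_sum_of_forall_mem hcover
    _ = #D * (Fintype.card F ^ t - 1) := sum_pow_finrank_sub_one_of_forall_finrank_eq hDt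
    _ ≤ maxCodeDim F (t * s) (2 * t) t * (Fintype.card F ^ t - 1) :=
        Nat.mul_le_mul_right _ (card_le_maxCodeDim hW (.of_pairwiseDisjoint hD hDt) hDt)

end Spread

section Codes

variable {F V : Type*} [Field F] [AddCommGroup V] [Module F V] [FiniteDimensional F V]
  {C : Finset (Submodule F V)} {d t : ℕ}

theorem IsSubspaceCode.pairwiseDisjoint_filter_finrank_eq (hC : IsSubspaceCode d C)
    (htd : 2 * t ≤ d + 1) :
    (({X ∈ C | finrank F (X : Submodule F V) = t} : Finset _) :
      Set (Submodule F V)).PairwiseDisjoint id := by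
  intro X hX Y hY hne
  simp only [coe_filter, Set.mem_ofPred_eq] at hX hY
  have := hC X hX.1 Y hY.1 hne
  exact disjoint_of_finrank_add_le_subspaceDist (X := X) (Y := Y) (by omega)

/-- Distances between subspaces of equal dimension are even, so `d ≥ 2t - 1` forces `2t`. -/
theorem IsSubspaceCode.filter_finrank_eq (hC : IsSubspaceCode d C) (htd : 2 * t ≤ d + 1)
    (k : ℕ) : IsSubspaceCode (2 * t) {X ∈ C | finrank F (X : Submodule F V) = k} := by
  intro X hX Y hY hne
  simp only [mem_filter] at hX hY
  have := hC X hX.1 Y hY.1 hne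
  have := subspaceDist_add_two_mul_finrank_inf X Y
  omega

theorem IsSubspaceCode.card_filter_finrank_lt_le_one (hC : IsSubspaceCode d C)
    (htd : 2 * t ≤ d + 1) : #{X ∈ C | finrank F (X : Submodule F V) < t} ≤ 1 := by
  refine card_le_one.mpr fun X hX Y hY ↦ by_contra fun hne ↦ ?_
  simp only [mem_filter] at hX hY
  have := hC X hX.1 Y hY.1 hne
  have := subspaceDist_add_two_mul_finrank_inf X Y
  omega

theorem IsSubspaceCode.card_filter_lt_finrank_le_one (hC : IsSubspaceCode d C)
    (htd : 2 * t ≤ d + 1) :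
    #{X ∈ C | finrank F V - t < finrank F (X : Submodule F V)} ≤ 1 := by
  refine card_le_one.mpr fun X hX Y hY ↦ by_contra fun hne ↦ ?_
  simp only [mem_filter] at hX hY
  have := hC X hX.1 Y hY.1 hne
  have := subspaceDist_add_finrank_add_finrank X Y
  have := Submodule.finrank_le (X ⊔ Y)
  omega

theorem IsSubspaceCode.disjoint_and_finrank_add_one_eq_and_ne_bot (hC : IsSubspaceCode d C)
    (hd : 2 ≤ d) (htd : 2 * t ≤ d + 1) {U X : Submodule F V} (hU : U ∈ C)
    (hUt : finrank F U < t) (hX : X ∈ C) (hXt : finrank F X = t) :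
    Disjoint U X ∧ finrank F U + 1 = t ∧ U ≠ ⊥ := by
  have hUX := hC U hU X hX (by rintro rfl; omega)
  have := subspaceDist_add_two_mul_finrank_inf U X
  have hdisj : Disjoint U X := disjoint_of_finrank_add_le_subspaceDist (by omega)
  rw [subspaceDist_of_disjoint hdisj] at hUX
  exact ⟨hdisj, by omega, by rw [Ne, ← Submodule.finrank_eq_zero]; omega⟩

variable [Fintype F] {N : ℕ}

/-- The member of dimension `< t`, if any, is disjoint from all `t`-dimensional members, which
therefore number fewer than `N`. -/
theorem IsSubspaceCode.card_filter_finrank_le_le_max (hC : IsSubspaceCode d C) (hd : 2 ≤ d)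
    (htd : 2 * t ≤ d + 1) (htV : t ≤ finrank F V)
    (hN : Fintype.card F ^ finrank F V - 1 ≤ N * (Fintype.card F ^ t - 1)) :
    #{X ∈ C | finrank F (X : Submodule F V) ≤ t} ≤
      max #{X ∈ C | finrank F (X : Submodule F V) = t} N := by
  have : Finite V := Module.finite_of_finite F
  have : Fintype V := Fintype.ofFinite V
  rw [card_filter_le_eq_card_filter_lt_add C (fun X ↦ finrank F X) t]
  obtain hsmall | ⟨U, hU⟩ := ({X ∈ C | finrank F (X : Submodule F V) < t}).eq_empty_or_nonempty
  · rw [hsmall, card_empty, zero_add]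
    exact le_max_left _ _
  rw [mem_filter] at hU
  have hlt : #{X ∈ C | finrank F (X : Submodule F V) = t} < N := by
    obtain hmid | ⟨W, hW⟩ := ({X ∈ C | finrank F (X : Submodule F V) = t}).eq_empty_or_nonempty
    · rw [hmid, card_empty, Nat.pos_iff_ne_zero]
      rintro rfl
      have := Nat.one_lt_pow (n := finrank F V) (by omega) (Fintype.one_lt_card (α := F))
      omega
    have hUX (X) (hX : X ∈ {X ∈ C | finrank F (X : Submodule F V) = t}) :=
      hC.disjoint_and_finrank_add_one_eq_and_ne_bot hd htd hU.1 hU.2 (mem_filter.mp hX).1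
        (mem_filter.mp hX).2
    exact card_lt_of_disjoint_of_pow_sub_one_le (hC.pairwiseDisjoint_filter_finrank_eq htd)
      (fun X hX ↦ (mem_filter.mp hX).2) (hUX W hW).2.2 (fun X hX ↦ (hUX X hX).1) hN
  have := hC.card_filter_finrank_lt_le_one htd
  omega

theorem IsSubspaceCode.card_filter_le_finrank_le_max (hC : IsSubspaceCode d C) (hd : 2 ≤ d)
    (htd : 2 * t ≤ d + 1) (htV : t ≤ finrank F V)
    (hN : Fintype.card F ^ finrank F V - 1 ≤ N * (Fintype.card F ^ t - 1)) :
    #{X ∈ C | finrank F V - t ≤ finrank F (X : Submodule F V)} ≤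
      max #{X ∈ C | finrank F (X : Submodule F V) = finrank F V - t} N := by
  have hdual := hC.image_dualAnnihilator.card_filter_finrank_le_le_max hd htd
    (by rwa [Subspace.dual_finrank_eq]) (by rwa [Subspace.dual_finrank_eq])
  have hinj : Set.InjOn Submodule.dualAnnihilator (C : Set (Submodule F V)) :=
    fun X _ Y _ h ↦ Subspace.dualAnnihilator_inj.mp h
  rw [filter_image, filter_image, card_image_of_injOn (hinj.mono (filter_subset _ _)),
    card_image_of_injOn (hinj.mono (filter_subset _ _))] at hdual
  have hdim (X : Submodule F V) : finrank F X.dualAnnihilator + finrank F X = finrank F V := by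
    rw [add_comm, Subspace.finrank_add_finrank_dualAnnihilator_eq]
  have hlarge : {X ∈ C | finrank F V - t ≤ finrank F (X : Submodule F V)} =
      {X ∈ C | finrank F X.dualAnnihilator ≤ t} := filter_congr fun X _ ↦ by
    have := hdim X; have := Submodule.finrank_le X; omega
  have hmid : {X ∈ C | finrank F (X : Submodule F V) = finrank F V - t} =
      {X ∈ C | finrank F X.dualAnnihilator = t} := filter_congr fun X _ ↦ by
    have := hdim X; have := Submodule.finrank_le X; omega
  rwa [hlarge, hmid]

end Codes

section MiddleDimension

variable {F V : Type*} [Field F] [Fintype F] [AddCommGroup V] [Module F V]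
  [FiniteDimensional F V] {C : Finset (Submodule F V)} {d t N : ℕ}

theorem pow_add_one_le_of_pow_two_mul_sub_one_le {q : ℕ} (hq : 1 < q) (ht : t ≠ 0)
    (hN : q ^ (2 * t) - 1 ≤ N * (q ^ t - 1)) : q ^ t + 1 ≤ N := by
  refine Nat.le_of_mul_le_mul_right ?_ (Nat.sub_pos_of_lt (Nat.one_lt_pow ht hq))
  rwa [← mul_self_tsub_one, ← pow_add, ← two_mul]

theorem IsSubspaceCode.card_filter_finrank_eq_add_two_le (hC : IsSubspaceCode d C)
    (hd : 2 ≤ d) (htd : 2 * t ≤ d + 1) (hV : finrank F V = 2 * t)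
    (hN : Fintype.card F ^ finrank F V - 1 ≤ N * (Fintype.card F ^ t - 1))
    {U L : Submodule F V} (hU : U ∈ C) (hUt : finrank F U < t) (hL : L ∈ C)
    (hLt : t < finrank F L) : #{X ∈ C | finrank F (X : Submodule F V) = t} + 2 ≤ N := by
  have : Finite V := Module.finite_of_finite F
  have : Fintype V := Fintype.ofFinite V
  have hqN := pow_add_one_le_of_pow_two_mul_sub_one_le Fintype.one_lt_card (by omega) (hV ▸ hN)
  obtain hmid | ⟨W, hW⟩ := ({X ∈ C | finrank F (X : Submodule F V) = t}).eq_empty_or_nonempty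
  · rw [hmid, card_empty]
    have := Nat.one_le_pow t _ (Fintype.card_pos (α := F))
    omega
  have hUX (X) (hX : X ∈ {X ∈ C | finrank F (X : Submodule F V) = t}) :=
    hC.disjoint_and_finrank_add_one_eq_and_ne_bot hd htd hU hUt (mem_filter.mp hX).1
      (mem_filter.mp hX).2
  have hUdim := (hUX W hW).2.1
  rw [mem_filter] at hW
  have hLdim : finrank F L = t + 1 := by
    have := hC L hL W hW.1 (by rintro rfl; omega)
    have := subspaceDist_add_finrank_add_finrank L W
    have := Submodule.finrank_le (L ⊔ W)
    omega
  have hLU : Disjoint L U := by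
    have := hC L hL U hU (by rintro rfl; omega)
    have := subspaceDist_add_two_mul_finrank_inf L U
    exact disjoint_of_finrank_add_le_subspaceDist (by omega)
  have hLX (X) (hX : X ∈ {X ∈ C | finrank F (X : Submodule F V) = t}) :
      finrank F ↥(L ⊓ X) ≤ 1 := by
    rw [mem_filter] at hX
    have := hC L hL X hX.1 (by rintro rfl; omega)
    have := subspaceDist_add_two_mul_finrank_inf L X
    omega
  have := card_lt_pow_of_disjoint_of_finrank_inf_le_one
    (hC.pairwiseDisjoint_filter_finrank_eq htd) (fun X hX ↦ (mem_filter.mp hX).2) hV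
    (hUX W (mem_filter.mpr hW)).2.2 (fun X hX ↦ (hUX X hX).1) hLU hLdim hLX
  omega

theorem IsSubspaceCode.card_le_max_of_finrank_eq_two_mul (hC : IsSubspaceCode d C) (hd : 2 ≤ d)
    (htd : 2 * t ≤ d + 1) (hV : finrank F V = 2 * t)
    (hN : Fintype.card F ^ finrank F V - 1 ≤ N * (Fintype.card F ^ t - 1)) :
    #C ≤ max #{X ∈ C | finrank F (X : Submodule F V) = t} N := by
  have hvt : finrank F V - t = t := by omega
  obtain hlarge | ⟨L, hL⟩ := ({X ∈ C | t < finrank F (X : Submodule F V)}).eq_empty_or_nonempty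
  · rw [filter_eq_empty_iff] at hlarge
    calc #C = #{X ∈ C | finrank F (X : Submodule F V) ≤ t} :=
          congrArg card (filter_true_of_mem fun X hX ↦ not_lt.mp (hlarge hX)).symm
      _ ≤ _ := hC.card_filter_finrank_le_le_max hd htd (by omega) hN
  obtain hsmall | ⟨U, hU⟩ := ({X ∈ C | finrank F (X : Submodule F V) < t}).eq_empty_or_nonempty
  · rw [filter_eq_empty_iff] at hsmall
    have hdual := hC.card_filter_le_finrank_le_max hd htd (by omega) hN
    rw [hvt] at hdual
    calc #C = #{X ∈ C | t ≤ finrank F (X : Submodule F V)} :=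
          congrArg card (filter_true_of_mem fun X hX ↦ not_lt.mp (hsmall hX)).symm
      _ ≤ _ := hdual
  rw [mem_filter] at hL hU
  have hpart : #C = #{X ∈ C | finrank F (X : Submodule F V) < t} +
      #{X ∈ C | finrank F (X : Submodule F V) = t} +
      #{X ∈ C | finrank F V - t < finrank F (X : Submodule F V)} := by
    rw [← card_filter_le_eq_card_filter_lt_add, hvt,
      ← card_filter_add_card_filter_not fun X : Submodule F V ↦ finrank F X ≤ t]
    simp only [not_le]
  have := hC.card_filter_finrank_lt_le_one htd
  have := hC.card_filter_lt_finrank_le_one htd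
  have := hC.card_filter_finrank_eq_add_two_le hd htd hV hN hU.1 hU.2 hL.1 hL.2
  omega

end MiddleDimension

section Layers

variable {F : Type*} [Field F] [Fintype F] {v d t : ℕ} {C : Finset (Submodule F (Fin v → F))}

theorem IsSubspaceCode.card_filter_finrank_eq_le_maxCodeDim (hC : IsSubspaceCode d C)
    (htd : 2 * t ≤ d + 1) (k : ℕ) :
    #{X ∈ C | finrank F (X : Submodule F (Fin v → F)) = k} ≤ maxCodeDim F v (2 * t) k :=
  card_le_maxCodeDim (finrank_fin_fun F) (hC.filter_finrank_eq htd k)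
    fun _ hX ↦ (mem_filter.mp hX).2

/-- Codewords of dimension `< t` are charged to layer `t`, those of dimension `> v - t` to
layer `v - t`. -/
theorem IsSubspaceCode.card_filter_clamp_le (hC : IsSubspaceCode d C) (hd : 2 ≤ d)
    (htd : 2 * t ≤ d + 1) (htv : 2 * t ≤ v)
    (hN : Fintype.card F ^ v - 1 ≤ maxCodeDim F v (2 * t) t * (Fintype.card F ^ t - 1))
    {i : ℕ} (hi : i ∈ Icc t (v - t)) :
    #{X ∈ C | max t (min (finrank F (X : Submodule F (Fin v → F))) (v - t)) = i} ≤
      maxCodeDim F v (2 * t) i := by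
  rw [mem_Icc] at hi
  have hV : finrank F (Fin v → F) = v := finrank_fin_fun F
  have hlayer := hC.card_filter_finrank_eq_le_maxCodeDim htd i
  rcases hi.1.eq_or_lt with rfl | hti
  · rcases htv.eq_or_lt with hv | hv
    · rw [filter_true_of_mem fun _ _ ↦ by omega]
      exact (hC.card_le_max_of_finrank_eq_two_mul hd htd (hV.trans hv.symm) (by rwa [hV])).trans
        (max_le hlayer le_rfl)
    · rw [filter_congr fun (X : Submodule F (Fin v → F)) _ ↦ show _ ↔ finrank F X ≤ t by omega]
      exact (hC.card_filter_finrank_le_le_max hd htd (by omega) (by rwa [hV])).trans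
        (max_le hlayer le_rfl)
  rcases hi.2.eq_or_lt with rfl | hit
  · rw [filter_congr fun (X : Submodule F (Fin v → F)) _ ↦
      show _ ↔ finrank F (Fin v → F) - t ≤ finrank F X by omega]
    have := hC.card_filter_le_finrank_le_max hd htd (by omega) (by rwa [hV])
    rw [hV] at this ⊢
    exact this.trans (max_le hlayer maxCodeDim_le_maxCodeDim_sub)
  · rwa [filter_congr fun (X : Submodule F (Fin v → F)) _ ↦ show _ ↔ finrank F X = i by omega]

end Layers

theorem johnson_mixed_spread_bound_general (v d : ℕ) (F : Type*) [Field F] [Fintype F]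
    (hd : 2 ≤ d) (hdv : d ≤ v)
    (hdvd : (d + 1) / 2 ∣ v) :
    maxCode F v d ≤ ∑ i ∈ Finset.Icc ((d + 1) / 2) (v - (d + 1) / 2),
      maxCodeDim F v (2 * ((d + 1) / 2)) i := by
  set t := (d + 1) / 2
  have htd : 2 * t ≤ d + 1 := by omega
  have htv : 2 * t ≤ v := by
    obtain ⟨s, hs⟩ := hdvd
    rcases s with _ | _ | s <;> nlinarith
  have hN := pow_sub_one_le_maxCodeDim_mul (F := F) (by omega) hdvd
  refine maxCode_le fun C hC ↦ ?_
  rw [card_eq_sum_card_fiberwise (t := Icc t (v - t))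
    (f := fun X : Submodule F (Fin v → F) ↦ max t (min (finrank F X) (v - t)))
    fun X _ ↦ by simp only [coe_Icc, Set.mem_Icc]; omega]
  exact sum_le_sum fun i hi ↦ hC.card_filter_clamp_le hd htd htv hN hi

/-- If ⌈d/2⌉ divides v, then A_q(v,d) ≤ Σ_{i=⌈d/2⌉}^{v-⌈d/2⌉} A_q(v, 2⌈d/2⌉; i). -/
theorem johnson_mixed_spread_bound (q v d : ℕ) (F : Type*) [Field F] [Fintype F]
    (hF : Fintype.card F = q) (hv : 1 ≤ v) (hd : 2 ≤ d) (hdv : d ≤ v)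
    (hdvd : (d + 1) / 2 ∣ v) :
    maxCode F v d ≤ ∑ i ∈ Finset.Icc ((d + 1) / 2) (v - (d + 1) / 2),
      maxCodeDim F v (2 * ((d + 1) / 2)) i :=
  johnson_mixed_spread_bound_general v d F hd hdv hdvd
end

section
/- Let q be a prime power, d an even positive integer, and v, k integers with d/2 ≤ k ≤ v/2. Define N_{d/2} = A_q(v−k+d/2, d; d/2) and recursively N_{j+1} = ⌊ (q^{v−k+j+1}−1)/(q^{j+1}−1) · N_j ⌋ for j = d/2, d/2+1, …, k−1. Then A_q(v,d;k) ≤ N_k. (This is the iterated application of the Johnson type bound II, i.e., A_q(v,d;k) ≤ ⌊ (q^v−1)/(q^k−1) ⌊ (q^{v−1}−1)/(q^{k−1}−1) ⌊ … ⌊ (q^{v−k+d/2+1}−1)/(q^{d/2+1}−1) · A_q(v−k+d/2,d;d/2) ⌋ … ⌋ ⌋ ⌋.) -/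
open scoped Classical

open Module Submodule

section MyAux

variable {F : Type*} [Field F]

lemma myMapInf {V W : Type*} [AddCommGroup V] [Module F V] [AddCommGroup W]
    [Module F W] (f : V →ₗ[F] W) {X Y : Submodule F V} (h : LinearMap.ker f ≤ X) :
    Submodule.map f (X ⊓ Y) = Submodule.map f X ⊓ Submodule.map f Y := by
  apply le_antisymm
  · exact le_inf (Submodule.map_mono inf_le_left) (Submodule.map_mono inf_le_right)
  · intro z hz
    rw [Submodule.mem_inf] at hz
    obtain ⟨⟨a, haX, rfl⟩, ⟨b, hbY, hba⟩⟩ := hz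
    have hk : b - a ∈ LinearMap.ker f := by
      rw [LinearMap.mem_ker, map_sub, hba, sub_self]
    have hbX : b ∈ X := by
      have := X.add_mem (h hk) haX
      rwa [sub_add_cancel] at this
    exact ⟨b, Submodule.mem_inf.mpr ⟨hbX, hbY⟩, hba⟩

lemma myFinrankMapMkQ {V : Type*} [AddCommGroup V] [Module F V] [FiniteDimensional F V]
    {P Z : Submodule F V} (h : P ≤ Z) :
    finrank F ↥(Z.map P.mkQ) + finrank F ↥P = finrank F ↥Z := by
  have h3 := LinearMap.finrank_range_add_finrank_ker (P.mkQ.domRestrict Z)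
  rw [LinearMap.range_domRestrict, LinearMap.ker_domRestrict, Submodule.ker_mkQ,
    (Submodule.comapSubtypeEquivOfLe h).finrank_eq] at h3
  exact h3

lemma myDistMapEquiv {V W : Type*} [AddCommGroup V] [Module F V] [AddCommGroup W] [Module F W]
    (e : V ≃ₗ[F] W) (X Y : Submodule F V) :
    subspaceDist (X.map (e : V →ₗ[F] W)) (Y.map (e : V →ₗ[F] W)) = subspaceDist X Y := by
  unfold subspaceDist
  rw [← Submodule.map_sup, ← Submodule.map_inf (e : V →ₗ[F] W) e.injective,
    LinearEquiv.finrank_map_eq, LinearEquiv.finrank_map_eq]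

lemma myBddAbove (F : Type*) [Field F] [Fintype F] (v d k : ℕ) :
    BddAbove {n | ∃ C : Finset (Submodule F (Fin v → F)), IsSubspaceCode d C ∧
      (∀ X ∈ C, Module.finrank F ↥X = k) ∧ C.card = n} := by
  have : Finite (Submodule F (Fin v → F)) := Finite.of_injective _ SetLike.coe_injective
  have := Fintype.ofFinite (Submodule F (Fin v → F))
  refine ⟨Fintype.card (Submodule F (Fin v → F)), ?_⟩
  rintro n ⟨C, -, -, rfl⟩
  exact Finset.card_le_univ C

lemma myExistsMax (F : Type*) [Field F] [Fintype F] (v d k : ℕ) :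
    ∃ C : Finset (Submodule F (Fin v → F)), IsSubspaceCode d C ∧
      (∀ X ∈ C, Module.finrank F ↥X = k) ∧ C.card = maxCodeDim F v d k := by
  unfold maxCodeDim
  apply Nat.sSup_mem _ (myBddAbove F v d k)
  exact ⟨0, ∅, fun X hX => ((Finset.notMem_empty X) hX).elim,
    fun X hX => ((Finset.notMem_empty X) hX).elim, Finset.card_empty⟩

lemma myCardLe [Fintype F] {V : Type*} [AddCommGroup V] [Module F V]
    [FiniteDimensional F V] {n d k : ℕ} (hn : finrank F V = n)
    (C : Finset (Submodule F V)) (hC : IsSubspaceCode d C)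
    (hdim : ∀ X ∈ C, finrank F ↥X = k) :
    C.card ≤ maxCodeDim F n d k := by
  obtain ⟨e⟩ : Nonempty (V ≃ₗ[F] (Fin n → F)) :=
    FiniteDimensional.nonempty_linearEquiv_of_finrank_eq
      (by rw [hn, Module.finrank_fin_fun])
  have hinj : Function.Injective (Submodule.map (e : V →ₗ[F] (Fin n → F))) :=
    Submodule.map_injective_of_injective e.injective
  refine le_csSup (myBddAbove F n d k)
    ⟨C.image (Submodule.map (e : V →ₗ[F] (Fin n → F))), ?_, ?_, ?_⟩
  · intro X' hX' Y' hY' hne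
    obtain ⟨X, hX, rfl⟩ := Finset.mem_image.mp hX'
    obtain ⟨Y, hY, rfl⟩ := Finset.mem_image.mp hY'
    have hXY : X ≠ Y := fun h => hne (by rw [h])
    rw [myDistMapEquiv]
    exact hC X hX Y hY hXY
  · intro X' hX'
    obtain ⟨X, hX, rfl⟩ := Finset.mem_image.mp hX'
    rw [LinearEquiv.finrank_map_eq]
    exact hdim X hX
  · exact Finset.card_image_of_injective C hinj

end MyAux
lemma myJohnsonStep (q w d k : ℕ) (F : Type*) [Field F] [Fintype F]
    (hF : Fintype.card F = q) :
    maxCodeDim F (w + 1) d (k + 1) ≤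
      ⌊((q : ℚ) ^ (w + 1) - 1) / ((q : ℚ) ^ (k + 1) - 1) * (maxCodeDim F w d k : ℚ)⌋₊ := by
  have hq2 : 2 ≤ q := hF ▸ Fintype.one_lt_card
  obtain ⟨C, hC, hdim, hcard⟩ := myExistsMax F (w + 1) d (k + 1)
  set A := maxCodeDim F w d k with hA
  set V := (Fin (w + 1) → F) with hVdef
  have hV : finrank F V = w + 1 := Module.finrank_fin_fun F
  -- key: through each nonzero vector pass at most A codewords
  have key : ∀ x : V, x ≠ 0 → (C.filter (fun X => x ∈ X)).card ≤ A := by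
    intro x hx
    set P : Submodule F V := Submodule.span F {x} with hPdef
    have hP1 : finrank F ↥P = 1 := finrank_span_singleton hx
    set D := C.filter (fun X => x ∈ X) with hDdef
    have hPle : ∀ X ∈ D, P ≤ X := by
      intro X hX
      rw [hPdef, Submodule.span_le, Set.singleton_subset_iff]
      exact (Finset.mem_filter.mp hX).2
    have hquot : finrank F (V ⧸ P) = w := by
      have h := Submodule.finrank_quotient_add_finrank P
      rw [hP1, hV] at h
      omega
    have hker : LinearMap.ker P.mkQ = P := P.ker_mkQ
    have hinj : Set.InjOn (Submodule.map P.mkQ) ↑D := by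
      intro X hX Y hY hXY
      have h := congrArg (Submodule.comap P.mkQ) hXY
      rwa [Submodule.comap_map_eq, Submodule.comap_map_eq, hker,
        sup_eq_left.mpr (hPle X hX), sup_eq_left.mpr (hPle Y hY)] at h
    have hdist : ∀ X ∈ D, ∀ Y ∈ D,
        subspaceDist (X.map P.mkQ) (Y.map P.mkQ) = subspaceDist X Y := by
      intro X hX Y hY
      have hsup : P ≤ X ⊔ Y := le_trans (hPle X hX) le_sup_left
      have hinf : P ≤ X ⊓ Y := le_inf (hPle X hX) (hPle Y hY)
      have h1 := myFinrankMapMkQ hsup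
      have h2 := myFinrankMapMkQ hinf
      rw [hP1] at h1 h2
      unfold subspaceDist
      rw [← Submodule.map_sup, ← myMapInf P.mkQ (show LinearMap.ker P.mkQ ≤ X by
        rw [hker]; exact hPle X hX), ← h1, ← h2]
      omega
    have hDcard : D.card = (D.image (Submodule.map P.mkQ)).card :=
      (Finset.card_image_of_injOn hinj).symm
    rw [hDdef] at hDcard ⊢
    rw [hDcard]
    apply myCardLe hquot
    · intro X' hX' Y' hY' hne
      obtain ⟨X, hX, rfl⟩ := Finset.mem_image.mp hX'
      obtain ⟨Y, hY, rfl⟩ := Finset.mem_image.mp hY'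
      have hXY : X ≠ Y := fun h => hne (by rw [h])
      rw [hdist X hX Y hY]
      exact hC X (Finset.mem_filter.mp hX).1 Y (Finset.mem_filter.mp hY).1 hXY
    · intro X' hX'
      obtain ⟨X, hX, rfl⟩ := Finset.mem_image.mp hX'
      have h := myFinrankMapMkQ (hPle X hX)
      rw [hP1, hdim X (Finset.mem_filter.mp hX).1] at h
      omega
  -- counting
  have hcard1 : ∀ X ∈ C,
      ((Finset.univ.filter (fun x : V => x ≠ 0)).filter (fun x => x ∈ X)).card
        = q ^ (k + 1) - 1 := by
    intro X hX
    have hXcard : Fintype.card ↥X = q ^ (k + 1) := by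
      rw [card_eq_pow_finrank (K := F) (V := ↥X), hF, hdim X hX]
    have heq : (Finset.univ.filter (fun x : V => x ≠ 0)).filter (fun x => x ∈ X)
        = (Finset.univ.filter (fun x : V => x ∈ X)).erase 0 := by
      ext y
      simp only [Finset.mem_filter, Finset.mem_erase, Finset.mem_univ, true_and]
    rw [heq, Finset.card_erase_of_mem
      (by simp only [Finset.mem_filter, Finset.mem_univ, true_and]; exact X.zero_mem),
      ← Fintype.card_subtype, hXcard]
  have hswap : ∑ x ∈ Finset.univ.filter (fun x : V => x ≠ 0),
      (C.filter (fun X => x ∈ X)).card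
      = ∑ X ∈ C, ((Finset.univ.filter (fun x : V => x ≠ 0)).filter (fun x => x ∈ X)).card := by
    simp only [Finset.card_filter]
    exact Finset.sum_comm
  have hrhs : ∑ X ∈ C, ((Finset.univ.filter (fun x : V => x ≠ 0)).filter (fun x => x ∈ X)).card
      = C.card * (q ^ (k + 1) - 1) := by
    rw [Finset.sum_congr rfl hcard1, Finset.sum_const, smul_eq_mul]
  have hlhs : ∑ x ∈ Finset.univ.filter (fun x : V => x ≠ 0),
      (C.filter (fun X => x ∈ X)).card ≤ (q ^ (w + 1) - 1) * A := by
    have hb := Finset.sum_le_card_nsmul (Finset.univ.filter (fun x : V => x ≠ 0))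
      (fun x => (C.filter (fun X => x ∈ X)).card) A
      (fun x hx => key x (Finset.mem_filter.mp hx).2)
    rw [smul_eq_mul] at hb
    have hcardV : (Finset.univ.filter (fun x : V => x ≠ 0)).card = q ^ (w + 1) - 1 := by
      rw [Finset.filter_ne', Finset.card_erase_of_mem (Finset.mem_univ 0),
        Finset.card_univ, card_eq_pow_finrank (K := F) (V := V), hF, hV]
    rwa [hcardV] at hb
  have hcount : C.card * (q ^ (k + 1) - 1) ≤ (q ^ (w + 1) - 1) * A := by
    rw [← hrhs, ← hswap]; exact hlhs
  rw [← hcard]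
  have h1 : 1 ≤ q ^ (k + 1) := Nat.one_le_pow _ _ (by omega)
  have h2 : 1 ≤ q ^ (w + 1) := Nat.one_le_pow _ _ (by omega)
  apply Nat.le_floor
  have hden : (0:ℚ) < (q:ℚ) ^ (k + 1) - 1 := by
    have hq : (1:ℚ) < q := by exact_mod_cast hq2
    have : (1:ℚ) < (q:ℚ) ^ (k+1) := one_lt_pow₀ hq (Nat.succ_ne_zero k)
    linarith
  rw [div_mul_eq_mul_div, le_div_iff₀ hden]
  have hc : ((C.card * (q ^ (k + 1) - 1) : ℕ) : ℚ) ≤ (((q ^ (w + 1) - 1) * A : ℕ) : ℚ) :=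
    Nat.cast_le.mpr hcount
  rw [Nat.cast_mul, Nat.cast_mul, Nat.cast_sub h1, Nat.cast_sub h2, Nat.cast_pow,
    Nat.cast_pow, Nat.cast_one] at hc
  linarith
/-- Iterated Johnson type bound II:
A_q(v,d;k) ≤ ⌊(q^v-1)/(q^k-1) ⌊(q^{v-1}-1)/(q^{k-1}-1) ⌊ … ⌊(q^{v-k+d/2+1}-1)/(q^{d/2+1}-1)
· A_q(v-k+d/2,d;d/2)⌋ … ⌋⌋⌋. -/
theorem johnson_bound_iterated (q v d k : ℕ) (F : Type*) [Field F] [Fintype F]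
    (hF : Fintype.card F = q) (hd : Even d) (hd0 : 0 < d) (hk1 : d / 2 ≤ k) (hk2 : 2 * k ≤ v)
    (N : ℕ → ℕ) (hbase : N (d / 2) = maxCodeDim F (v - k + d / 2) d (d / 2))
    (hrec : ∀ j, d / 2 ≤ j → j < k →
      N (j + 1) = ⌊((q : ℚ) ^ (v - k + j + 1) - 1) / ((q : ℚ) ^ (j + 1) - 1) * (N j : ℚ)⌋₊) :
    maxCodeDim F v d k ≤ N k := by
  have hq2 : 2 ≤ q := hF ▸ Fintype.one_lt_card
  have hkv : k ≤ v := le_trans (by omega) hk2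
  have key : ∀ j, d / 2 ≤ j → j ≤ k → maxCodeDim F (v - k + j) d j ≤ N j := by
    intro j hj
    induction j, hj using Nat.le_induction with
    | base => intro _; rw [hbase]
    | succ j hj ih =>
      intro hjk
      have hjk' : j < k := hjk
      have hNj : maxCodeDim F (v - k + j) d j ≤ N j := ih (le_of_lt hjk')
      calc maxCodeDim F (v - k + (j + 1)) d (j + 1)
          ≤ ⌊((q : ℚ) ^ (v - k + j + 1) - 1) / ((q : ℚ) ^ (j + 1) - 1) *
              (maxCodeDim F (v - k + j) d j : ℚ)⌋₊ :=
            myJohnsonStep q (v - k + j) d j F hF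
        _ ≤ ⌊((q : ℚ) ^ (v - k + j + 1) - 1) / ((q : ℚ) ^ (j + 1) - 1) * (N j : ℚ)⌋₊ := by
            apply Nat.floor_le_floor
            apply mul_le_mul_of_nonneg_left (by exact_mod_cast hNj)
            apply div_nonneg
            · have h1 : (1:ℚ) ≤ (q:ℚ) ^ (v - k + j + 1) :=
                one_le_pow₀ (by exact_mod_cast (by omega : 1 ≤ q))
              linarith
            · have h1 : (1:ℚ) ≤ (q:ℚ) ^ (j + 1) :=
                one_le_pow₀ (by exact_mod_cast (by omega : 1 ≤ q))
              linarith
        _ = N (j + 1) := (hrec j hj hjk').symm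
  have h := key k hk1 le_rfl
  rwa [Nat.sub_add_cancel hkv] at h
end

section
/- Let q be a prime power and let S be a set of q^4 + q^2 two-dimensional subspaces (lines) of 𝔽_q^6 that pairwise intersect trivially (a partial line spread of size q^4 + q^2). Then there exists a two-dimensional subspace L of 𝔽_q^6 intersecting every member of S trivially such that every one-dimensional subspace of 𝔽_q^6 not contained in any member of S is contained in L; in particular S ∪ {L} is a line spread of 𝔽_q^6, i.e., every partial line spread of size q^4 + q^2 in 𝔽_q^6 is extendible to a spread. -/
open scoped Classical

section Aux

open Finset Module Submodule

variable {F : Type*} [Field F] [Fintype F]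

private lemma card_filter_mem (W : Submodule F (Fin 6 → F)) :
    (Finset.univ.filter fun v => v ∈ W).card = Fintype.card F ^ finrank F ↥W := by
  rw [← Fintype.card_subtype]
  exact card_eq_pow_finrank (K := F) (V := ↥W)

private lemma card_filter_nonzero (W : Submodule F (Fin 6 → F)) :
    (Finset.univ.filter fun v => v ∈ W ∧ v ≠ 0).card
      = Fintype.card F ^ finrank F ↥W - 1 := by
  have h0 : (0 : Fin 6 → F) ∈ Finset.univ.filter fun v => v ∈ W := by
    simp [W.zero_mem]
  have he : (Finset.univ.filter fun v => v ∈ W ∧ v ≠ 0)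
      = (Finset.univ.filter fun v => v ∈ W).erase 0 := by
    ext v
    simp only [Finset.mem_erase, Finset.mem_filter, Finset.mem_univ, true_and]
    tauto
  rw [he, Finset.card_erase_of_mem h0, card_filter_mem]

private noncomputable def holesIn (S : Finset (Submodule F (Fin 6 → F)))
    (W : Submodule F (Fin 6 → F)) : Finset (Fin 6 → F) :=
  Finset.univ.filter fun v => (v ∈ W ∧ v ≠ 0) ∧ ∀ X ∈ S, v ∉ X

private lemma partition_count (S : Finset (Submodule F (Fin 6 → F)))
    (hdisj : ∀ X ∈ S, ∀ Y ∈ S, X ≠ Y → X ⊓ Y = ⊥)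
    (W : Submodule F (Fin 6 → F)) :
    Fintype.card F ^ finrank F ↥W - 1
      = (holesIn S W).card
        + ∑ X ∈ S, (Fintype.card F ^ finrank F ↥(X ⊓ W) - 1) := by
  have hsum : ∑ X ∈ S, (Fintype.card F ^ finrank F ↥(X ⊓ W) - 1)
      = (S.biUnion fun X => Finset.univ.filter fun v => v ∈ X ⊓ W ∧ v ≠ 0).card := by
    rw [Finset.card_biUnion]
    · exact Finset.sum_congr rfl fun X _ => (card_filter_nonzero _).symm
    · intro X hX Y hY hXY
      simp only [Finset.disjoint_left, Finset.mem_filter, Finset.mem_univ, true_and]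
      rintro v ⟨hvX, hv0⟩ ⟨hvY, _⟩
      have : v ∈ X ⊓ Y := ⟨hvX.1, hvY.1⟩
      rw [hdisj X hX Y hY hXY] at this
      exact hv0 this
  rw [← card_filter_nonzero W, hsum]
  rw [← Finset.card_union_of_disjoint]
  · congr 1
    ext v
    simp only [holesIn, Finset.mem_union, Finset.mem_filter, Finset.mem_univ, true_and,
      Finset.mem_biUnion, Submodule.mem_inf]
    constructor
    · rintro ⟨hvW, hv0⟩
      by_cases h : ∀ X ∈ S, v ∉ X
      · exact Or.inl ⟨⟨hvW, hv0⟩, h⟩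
      · push_neg at h
        obtain ⟨X, hX, hvX⟩ := h
        exact Or.inr ⟨X, hX, ⟨hvX, hvW⟩, hv0⟩
    · rintro (⟨⟨hvW, hv0⟩, _⟩ | ⟨X, hX, ⟨_, hvW⟩, hv0⟩) <;> exact ⟨hvW, hv0⟩
  · simp only [holesIn, Finset.disjoint_left, Finset.mem_filter, Finset.mem_univ, true_and,
      Finset.mem_biUnion, Submodule.mem_inf]
    rintro v ⟨_, hall⟩ ⟨X, hX, ⟨hvX, _⟩, _⟩
    exact hall X hX hvX

private lemma exists_hyperplane (L : Submodule F (Fin 6 → F)) {v : Fin 6 → F} (hv : v ∉ L) :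
    ∃ H : Submodule F (Fin 6 → F), finrank F ↥H = 5 ∧ L ≤ H ∧ v ∉ H := by
  have hmk : L.mkQ v ≠ 0 := by
    simpa [Submodule.Quotient.mk_eq_zero] using hv
  obtain ⟨f, hf⟩ : ∃ f : Module.Dual F ((Fin 6 → F) ⧸ L), f (L.mkQ v) ≠ 0 := by
    by_contra h
    push_neg at h
    exact hmk ((Module.forall_dual_apply_eq_zero_iff F _).mp h)
  refine ⟨LinearMap.ker (f ∘ₗ L.mkQ), ?_, ?_, ?_⟩
  · have hrank := LinearMap.finrank_range_add_finrank_ker (f ∘ₗ L.mkQ)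
    have hr : LinearMap.range (f ∘ₗ L.mkQ) = ⊤ := by
      rw [LinearMap.range_eq_top]
      intro x
      refine ⟨(x * (f (L.mkQ v))⁻¹) • v, ?_⟩
      have hf' : f (Submodule.Quotient.mk v) ≠ 0 := by simpa using hf
      simp only [LinearMap.comp_apply, map_smul, smul_eq_mul, Submodule.mkQ_apply]
      rw [mul_assoc, inv_mul_cancel₀ hf', mul_one]
    rw [hr, finrank_top] at hrank
    simp only [Module.finrank_self] at hrank
    have h6 : finrank F (Fin 6 → F) = 6 := by simp
    omega
  · intro x hx
    simp only [LinearMap.mem_ker, LinearMap.comp_apply, Submodule.mkQ_apply]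
    rw [(Submodule.Quotient.mk_eq_zero L).mpr hx]
    exact map_zero f
  · simp only [LinearMap.mem_ker, LinearMap.comp_apply]
    exact fun h => hf h

private lemma card_smul_img {u : Fin 6 → F} (hu : u ≠ 0) :
    ((Finset.univ.filter fun c : F => c ≠ 0).image fun c => c • u).card
      = Fintype.card F - 1 := by
  rw [Finset.card_image_of_injective _ (smul_left_injective F hu)]
  rw [Finset.filter_ne', Finset.card_erase_of_mem (Finset.mem_univ _), Finset.card_univ]

end Aux

section Main

open Finset Module Submodule

/-- Every partial line spread of size q^4 + q^2 in F_q^6 is extendible to a line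
spread: the q+1 uncovered points form a line. -/
theorem partial_line_spread_extendible (q : ℕ) (F : Type*) [Field F] [Fintype F]
    (hF : Fintype.card F = q) (S : Finset (Submodule F (Fin 6 → F)))
    (hdim : ∀ X ∈ S, Module.finrank F ↥X = 2)
    (hdisj : ∀ X ∈ S, ∀ Y ∈ S, X ≠ Y → X ⊓ Y = ⊥)
    (hcard : S.card = q ^ 4 + q ^ 2) :
    ∃ L : Submodule F (Fin 6 → F), Module.finrank F ↥L = 2 ∧
      (∀ X ∈ S, L ⊓ X = ⊥) ∧
      (∀ P : Submodule F (Fin 6 → F), Module.finrank F ↥P = 1 →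
        (∀ X ∈ S, ¬ P ≤ X) → P ≤ L) ∧
      (∀ P : Submodule F (Fin 6 → F), Module.finrank F ↥P = 1 →
        P ≤ L ∨ ∃ X ∈ S, P ≤ X) := by
  have hq2 : 2 ≤ q := hF ▸ Fintype.one_lt_card
  have hq1 : 1 ≤ q := by omega
  have hq2pow : 1 ≤ q ^ 2 := Nat.one_le_pow _ _ (by omega)
  have hq5pow : 1 ≤ q ^ 5 := Nat.one_le_pow _ _ (by omega)
  have hq6pow : 1 ≤ q ^ 6 := Nat.one_le_pow _ _ (by omega)
  have h6 : finrank F (Fin 6 → F) = 6 := by simp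
  -- total count of holes
  have htop := partition_count S hdisj ⊤
  rw [finrank_top, h6, hF] at htop
  have hsum_top : ∑ X ∈ S, (q ^ finrank F ↥(X ⊓ (⊤ : Submodule F (Fin 6 → F))) - 1)
      = (q ^ 4 + q ^ 2) * (q ^ 2 - 1) := by
    have hterm : ∀ X ∈ S, q ^ finrank F ↥(X ⊓ (⊤ : Submodule F (Fin 6 → F))) - 1
        = q ^ 2 - 1 := by
      intro X hX
      rw [inf_top_eq, hdim X hX]
    rw [Finset.sum_congr rfl hterm, Finset.sum_const, smul_eq_mul, hcard]
  rw [hsum_top] at htop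
  have hholes_card : (holesIn S (⊤ : Submodule F (Fin 6 → F))).card = q ^ 2 - 1 := by
    have e : (q ^ 4 + q ^ 2) * (q ^ 2 - 1) + (q ^ 2 - 1) = q ^ 6 - 1 := by
      zify [hq2pow, hq6pow]
      ring
    omega
  -- membership in holesIn S ⊤
  have hmem_top : ∀ v : Fin 6 → F,
      v ∈ holesIn S (⊤ : Submodule F (Fin 6 → F)) ↔ (v ≠ 0 ∧ ∀ X ∈ S, v ∉ X) := by
    intro v
    simp [holesIn]
  -- smul stability of holes
  have hsmul : ∀ v, v ∈ holesIn S (⊤ : Submodule F (Fin 6 → F)) →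
      ∀ c : F, c ≠ 0 → c • v ∈ holesIn S (⊤ : Submodule F (Fin 6 → F)) := by
    intro v hv c hc
    rw [hmem_top] at hv ⊢
    refine ⟨smul_ne_zero hc hv.1, fun X hX hmemX => hv.2 X hX ?_⟩
    simpa [smul_smul, inv_mul_cancel₀ hc] using X.smul_mem c⁻¹ hmemX
  -- pick a first hole
  obtain ⟨u, hu⟩ : ∃ u, u ∈ holesIn S (⊤ : Submodule F (Fin 6 → F)) := by
    have : 0 < (holesIn S (⊤ : Submodule F (Fin 6 → F))).card := by
      rw [hholes_card]
      have : 2 * 2 ≤ q * q := Nat.mul_le_mul hq2 hq2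
      have : q ^ 2 = q * q := sq q
      omega
    exact Finset.card_pos.mp this
  have hu0 : u ≠ 0 := ((hmem_top u).mp hu).1
  -- pick a hole outside the span of u
  obtain ⟨w, hw, hwu⟩ : ∃ w ∈ holesIn S (⊤ : Submodule F (Fin 6 → F)), w ∉ (F ∙ u) := by
    by_contra h
    push_neg at h
    have hsub : holesIn S (⊤ : Submodule F (Fin 6 → F))
        ⊆ Finset.univ.filter fun v => v ∈ (F ∙ u) ∧ v ≠ 0 := by
      intro v hv
      simp only [Finset.mem_filter, Finset.mem_univ, true_and]
      exact ⟨h v hv, ((hmem_top v).mp hv).1⟩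
    have hc := Finset.card_le_card hsub
    rw [card_filter_nonzero, finrank_span_singleton hu0, hF, pow_one, hholes_card] at hc
    have h1 : 2 * q ≤ q * q := Nat.mul_le_mul_right q hq2
    have h2 : q ^ 2 = q * q := sq q
    omega
  have hw0 : w ≠ 0 := ((hmem_top w).mp hw).1
  -- the key hyperplane step
  have hyper : ∀ H : Submodule F (Fin 6 → F), finrank F ↥H = 5 → u ∈ H → w ∈ H →
      ∀ v ∈ holesIn S (⊤ : Submodule F (Fin 6 → F)), v ∈ H := by
    intro H hH5 huH hwH
    have hpart := partition_count S hdisj H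
    rw [hH5, hF] at hpart
    set a := (S.filter fun X => X ≤ H).card with ha_def
    have ha : a ≤ q ^ 4 + q ^ 2 := hcard ▸ Finset.card_filter_le _ _
    have hsum : ∑ X ∈ S, (q ^ finrank F ↥(X ⊓ H) - 1)
        = a * (q ^ 2 - 1) + ((q ^ 4 + q ^ 2) - a) * (q - 1) := by
      rw [← Finset.sum_filter_add_sum_filter_not S (fun X => X ≤ H)]
      congr 1
      · have hterm : ∀ X ∈ S.filter fun X => X ≤ H,
            q ^ finrank F ↥(X ⊓ H) - 1 = q ^ 2 - 1 := by
          intro X hX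
          obtain ⟨hXS, hXH⟩ := Finset.mem_filter.mp hX
          rw [inf_eq_left.mpr hXH, hdim X hXS]
        rw [Finset.sum_congr rfl hterm, Finset.sum_const, smul_eq_mul]
      · have hterm : ∀ X ∈ S.filter fun X => ¬ X ≤ H,
            q ^ finrank F ↥(X ⊓ H) - 1 = q - 1 := by
          intro X hX
          obtain ⟨hXS, hXH⟩ := Finset.mem_filter.mp hX
          have hfin := Submodule.finrank_sup_add_finrank_inf_eq X H
          rw [hdim X hXS, hH5] at hfin
          have hle6 : finrank F ↥(X ⊔ H) ≤ 6 :=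
            le_trans (Submodule.finrank_le _) (le_of_eq h6)
          have hlt : finrank F ↥(X ⊓ H) < 2 := by
            rw [← hdim X hXS]
            exact Submodule.finrank_lt_finrank_of_lt
              (lt_of_le_of_ne inf_le_left fun he => hXH (inf_eq_left.mp he))
          have : finrank F ↥(X ⊓ H) = 1 := by omega
          rw [this, pow_one]
        rw [Finset.sum_congr rfl hterm, Finset.sum_const, smul_eq_mul]
        congr 1
        have := Finset.card_filter_add_card_filter_not (s := S)
          (p := fun X => X ≤ H)
        omega
    rw [hsum] at hpart
    -- key identity
    have key : (holesIn S H).card + a * q * (q - 1) = (q - 1) * (q ^ 3 + q + 1) := by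
      zify [hq1, hq2pow, hq5pow, ha] at hpart ⊢
      linear_combination -hpart
    -- lower bound from the two holes u, w in H
    set A := (Finset.univ.filter fun c : F => c ≠ 0).image fun c => c • u with hA_def
    set B := (Finset.univ.filter fun c : F => c ≠ 0).image fun c => c • w with hB_def
    have hA : A ⊆ holesIn S H := by
      intro x hx
      simp only [hA_def, Finset.mem_image, Finset.mem_filter, Finset.mem_univ, true_and] at hx
      obtain ⟨c, hc, rfl⟩ := hx
      have hhole := (hmem_top _).mp (hsmul u hu c hc)
      simp only [holesIn, Finset.mem_filter, Finset.mem_univ, true_and]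
      exact ⟨⟨H.smul_mem c huH, hhole.1⟩, hhole.2⟩
    have hB : B ⊆ holesIn S H := by
      intro x hx
      simp only [hB_def, Finset.mem_image, Finset.mem_filter, Finset.mem_univ, true_and] at hx
      obtain ⟨c, hc, rfl⟩ := hx
      have hhole := (hmem_top _).mp (hsmul w hw c hc)
      simp only [holesIn, Finset.mem_filter, Finset.mem_univ, true_and]
      exact ⟨⟨H.smul_mem c hwH, hhole.1⟩, hhole.2⟩
    have hAB : Disjoint A B := by
      simp only [Finset.disjoint_left, hA_def, hB_def, Finset.mem_image, Finset.mem_filter,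
        Finset.mem_univ, true_and]
      rintro x ⟨c, hc, rfl⟩ ⟨d, hd, he⟩
      apply hwu
      have hwe : w = (d⁻¹ * c) • u := by
        rw [mul_smul, ← he, smul_smul, inv_mul_cancel₀ hd, one_smul]
      rw [hwe]
      exact Submodule.smul_mem _ _ (Submodule.mem_span_singleton_self u)
    have hbig : (q - 1) + (q - 1) ≤ (holesIn S H).card := by
      have hle := Finset.card_le_card (Finset.union_subset hA hB)
      rwa [Finset.card_union_of_disjoint hAB, card_smul_img hu0, card_smul_img hw0, hF] at hle
    -- divisibility and mod argument
    have hdvd : (q - 1) ∣ (holesIn S H).card := by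
      have h1 : (q - 1) ∣ (holesIn S H).card + a * q * (q - 1) := key ▸ ⟨q ^ 3 + q + 1, rfl⟩
      have h2 : (q - 1) ∣ a * q * (q - 1) := ⟨a * q, mul_comm _ _⟩
      have h3 := Nat.dvd_sub h1 h2
      simpa using h3
    obtain ⟨m, hm⟩ := hdvd
    have hmeq : m + a * q = q ^ 3 + q + 1 := by
      have hmul : (q - 1) * (m + a * q) = (q - 1) * (q ^ 3 + q + 1) := by
        rw [Nat.mul_add, ← hm, mul_comm (q - 1) (a * q), key]
      exact Nat.eq_of_mul_eq_mul_left (by omega) hmul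
    have hm2 : 2 ≤ m := by
      have h1 : (q - 1) * 2 ≤ (q - 1) * m := by
        rw [← hm]
        omega
      exact Nat.le_of_mul_le_mul_left h1 (by omega)
    have hmod : m % q = 1 := by
      have h1 : (m + a * q) % q = m % q := Nat.add_mul_mod_self_right m a q
      have h2 : (q ^ 3 + q + 1) % q = 1 := by
        have he : q ^ 3 + q + 1 = q * (q ^ 2 + 1) + 1 := by ring
        rw [he, Nat.mul_add_mod]
        exact Nat.mod_eq_of_lt (by omega)
      rw [hmeq] at h1
      omega
    have hmq : q + 1 ≤ m := by
      have hdm : q * (m / q) + 1 = m := by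
        conv_rhs => rw [← Nat.div_add_mod m q]
        rw [hmod]
      rcases Nat.eq_zero_or_pos (m / q) with h | h
      · rw [h, Nat.mul_zero] at hdm
        omega
      · calc q + 1 = q * 1 + 1 := by ring
          _ ≤ q * (m / q) + 1 := Nat.add_le_add_right (Nat.mul_le_mul_left q h) 1
          _ = m := hdm
    have hge : q ^ 2 - 1 ≤ (holesIn S H).card := by
      rw [hm]
      calc q ^ 2 - 1 = (q - 1) * (q + 1) := by
            zify [hq1, hq2pow]
            ring
        _ ≤ (q - 1) * m := Nat.mul_le_mul_left _ hmq
    have hsub : holesIn S H ⊆ holesIn S (⊤ : Submodule F (Fin 6 → F)) := by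
      intro x hx
      simp only [holesIn, Finset.mem_filter, Finset.mem_univ, true_and] at hx ⊢
      exact ⟨⟨Submodule.mem_top, hx.1.2⟩, hx.2⟩
    have heq := Finset.eq_of_subset_of_card_le hsub (by rw [hholes_card]; exact hge)
    intro v hv
    rw [← heq] at hv
    simp only [holesIn, Finset.mem_filter, Finset.mem_univ, true_and] at hv
    exact hv.1.1
  -- define L
  set L : Submodule F (Fin 6 → F) := (F ∙ u) ⊔ (F ∙ w) with hL_def
  have huL : u ∈ L := Submodule.mem_sup_left (Submodule.mem_span_singleton_self u)
  have hwL : w ∈ L := Submodule.mem_sup_right (Submodule.mem_span_singleton_self w)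
  have hinf : (F ∙ u) ⊓ (F ∙ w) = ⊥ := by
    rw [eq_bot_iff]
    intro x hx
    rw [Submodule.mem_inf] at hx
    rw [Submodule.mem_bot]
    by_contra hx0
    apply hwu
    have h1 : (F ∙ x) = (F ∙ u) :=
      Submodule.eq_of_le_of_finrank_le ((Submodule.span_singleton_le_iff_mem _ _).mpr hx.1)
        (by rw [finrank_span_singleton hu0, finrank_span_singleton hx0])
    have h2 : (F ∙ x) = (F ∙ w) :=
      Submodule.eq_of_le_of_finrank_le ((Submodule.span_singleton_le_iff_mem _ _).mpr hx.2)
        (by rw [finrank_span_singleton hw0, finrank_span_singleton hx0])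
    rw [← h1, h2]
    exact Submodule.mem_span_singleton_self w
  have hLrank : finrank F ↥L = 2 := by
    have hfr := Submodule.finrank_sup_add_finrank_inf_eq (F ∙ u) (F ∙ w)
    rw [hinf, finrank_span_singleton hu0, finrank_span_singleton hw0, finrank_bot] at hfr
    rw [hL_def]
    omega
  -- all holes are in L
  have hholeL : ∀ v ∈ holesIn S (⊤ : Submodule F (Fin 6 → F)), v ∈ L := by
    intro v hv
    by_contra hvL
    obtain ⟨H, hH5, hLH, hvH⟩ := exists_hyperplane L hvL
    exact hvH (hyper H hH5 (hLH huL) (hLH hwL) v hv)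
  -- holes are exactly the nonzero vectors of L
  have hLfin : holesIn S (⊤ : Submodule F (Fin 6 → F))
      = Finset.univ.filter fun v => v ∈ L ∧ v ≠ 0 := by
    apply Finset.eq_of_subset_of_card_le
    · intro v hv
      simp only [Finset.mem_filter, Finset.mem_univ, true_and]
      exact ⟨hholeL v hv, ((hmem_top v).mp hv).1⟩
    · rw [card_filter_nonzero, hLrank, hF, hholes_card]
  -- the third conclusion, proved first to reuse
  have hP3 : ∀ P : Submodule F (Fin 6 → F), Module.finrank F ↥P = 1 →
      (∀ X ∈ S, ¬ P ≤ X) → P ≤ L := by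
    intro P hP1 hPX
    have hPbot : P ≠ ⊥ := by
      intro h
      rw [h, finrank_bot] at hP1
      omega
    obtain ⟨x, hxP, hx0⟩ := (Submodule.ne_bot_iff P).mp hPbot
    have hspan : (F ∙ x) = P :=
      Submodule.eq_of_le_of_finrank_le ((Submodule.span_singleton_le_iff_mem _ _).mpr hxP)
        (by rw [finrank_span_singleton hx0, hP1])
    have hxhole : x ∈ holesIn S (⊤ : Submodule F (Fin 6 → F)) := by
      rw [hmem_top]
      exact ⟨hx0, fun X hX hxX =>
        hPX X hX (hspan ▸ (Submodule.span_singleton_le_iff_mem _ _).mpr hxX)⟩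
    have hxL : x ∈ L := hholeL x hxhole
    rw [← hspan]
    exact (Submodule.span_singleton_le_iff_mem _ _).mpr hxL
  refine ⟨L, hLrank, ?_, hP3, ?_⟩
  · intro X hX
    rw [eq_bot_iff]
    intro x hx
    rw [Submodule.mem_inf] at hx
    rw [Submodule.mem_bot]
    by_contra hx0
    have hxhole : x ∈ holesIn S (⊤ : Submodule F (Fin 6 → F)) := by
      rw [hLfin]
      simp only [Finset.mem_filter, Finset.mem_univ, true_and]
      exact ⟨hx.1, hx0⟩
    exact ((hmem_top x).mp hxhole).2 X hX hx.2
  · intro P hP1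
    by_cases h : ∃ X ∈ S, P ≤ X
    · exact Or.inr h
    · push_neg at h
      exact Or.inl (hP3 P hP1 h)

end Main
end

section
/- Let q be a prime power, let C₃ be a set of three-dimensional subspaces (planes) of 𝔽_q^7 such that any two distinct members intersect in a subspace of dimension at most 1, and let P be a one-dimensional subspace (point) of 𝔽_q^7 contained in no member of C₃. Then for every one-dimensional subspace Q ≠ P of 𝔽_q^7, the number of members of C₃ containing Q is at most q^4 + q^2. -/
open scoped Classical

/-- If the planes of C₃ in F_q^7 pairwise intersect in dimension at most 1 and the
point P lies in no member of C₃, then every point Q ≠ P lies on at most q^4 + q^2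
members of C₃. -/
theorem planes_through_point_le (q : ℕ) (F : Type*) [Field F] [Fintype F]
    (hF : Fintype.card F = q) (C₃ : Finset (Submodule F (Fin 7 → F)))
    (hdim : ∀ X ∈ C₃, Module.finrank F ↥X = 3)
    (hint : ∀ X ∈ C₃, ∀ Y ∈ C₃, X ≠ Y → Module.finrank F ↥(X ⊓ Y) ≤ 1)
    (P : Submodule F (Fin 7 → F)) (hP : Module.finrank F ↥P = 1)
    (hPfree : ∀ X ∈ C₃, ¬ P ≤ X) :
    ∀ Q : Submodule F (Fin 7 → F), Module.finrank F ↥Q = 1 → Q ≠ P →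
      (C₃.filter fun X => Q ≤ X).card ≤ q ^ 4 + q ^ 2 := by
  intro Q hQ hQP
  have hq2 : 2 ≤ q := hF ▸ Fintype.one_lt_card
  set V := Fin 7 → F with hV
  -- P ⊓ Q = ⊥
  have hPQbot : P ⊓ Q = ⊥ := by
    by_contra h
    have h1 : 1 ≤ Module.finrank F ↥(P ⊓ Q) := by
      rw [Nat.one_le_iff_ne_zero]
      intro h0
      exact h (Submodule.finrank_eq_zero.mp h0)
    have e1 : P ⊓ Q = P :=
      Submodule.eq_of_le_of_finrank_le inf_le_left (by omega)
    have e2 : P ⊓ Q = Q :=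
      Submodule.eq_of_le_of_finrank_le inf_le_right (by omega)
    exact hQP (e2 ▸ e1)
  have hPQ2 : Module.finrank F ↥(P ⊔ Q) = 2 := by
    have h := Submodule.finrank_sup_add_finrank_inf_eq P Q
    rw [hPQbot, hP, hQ] at h
    simp only [finrank_bot] at h
    omega
  -- X ⊓ (P ⊔ Q) = Q for planes X through Q
  have key : ∀ X ∈ C₃, Q ≤ X → X ⊓ (P ⊔ Q) = Q := by
    intro X hX hQX
    have hle : Q ≤ X ⊓ (P ⊔ Q) := le_inf hQX le_sup_right
    by_contra h
    have hlt : Q < X ⊓ (P ⊔ Q) := lt_of_le_of_ne hle (Ne.symm h)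
    have h2 := Submodule.finrank_lt_finrank_of_lt hlt
    rw [hQ] at h2
    have heq : X ⊓ (P ⊔ Q) = P ⊔ Q :=
      Submodule.eq_of_le_of_finrank_le inf_le_right (by omega)
    exact hPfree X hX (le_trans le_sup_left (heq ▸ inf_le_left : P ⊔ Q ≤ X))
  -- X ⊓ Y = Q for distinct planes through Q
  have key2 : ∀ X ∈ C₃, ∀ Y ∈ C₃, X ≠ Y → Q ≤ X → Q ≤ Y → X ⊓ Y = Q := by
    intro X hX Y hY hne hQX hQY
    exact (Submodule.eq_of_le_of_finrank_le (le_inf hQX hQY)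
      (by rw [hQ]; exact hint X hX Y hY hne)).symm
  -- card facts
  have cardSub : ∀ W : Submodule F V,
      (Finset.univ.filter (fun v : V => v ∈ W)).card = q ^ Module.finrank F ↥W := by
    intro W
    rw [← Fintype.card_subtype, ← hF]
    exact Module.card_eq_pow_finrank
  have cardV : Fintype.card V = q ^ 7 := by
    rw [← hF]
    simp [hV, Fintype.card_fun]
  -- the finsets
  set s := C₃.filter (fun X => Q ≤ X) with hs
  set f : Submodule F V → Finset V :=
    fun X => Finset.univ.filter (fun v => v ∈ X ∧ v ∉ (P ⊔ Q)) with hf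
  have hcardf : ∀ X ∈ s, (f X).card = q ^ 3 - q := by
    intro X hX
    rw [Finset.mem_filter] at hX
    obtain ⟨hX, hQX⟩ := hX
    have hsplit : (Finset.univ.filter (fun v : V => v ∈ X ∧ v ∈ (P ⊔ Q))).card
        + (f X).card = (Finset.univ.filter (fun v : V => v ∈ X)).card := by
      have h := Finset.card_filter_add_card_filter_not
        (s := Finset.univ.filter (fun v : V => v ∈ X)) (p := fun v => v ∈ (P ⊔ Q))
      rw [Finset.filter_filter, Finset.filter_filter] at h
      convert h using 3
    have h1 : (Finset.univ.filter (fun v : V => v ∈ X ∧ v ∈ (P ⊔ Q))).card = q := by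
      have : ∀ v : V, (v ∈ X ∧ v ∈ (P ⊔ Q)) ↔ v ∈ Q := by
        intro v
        constructor
        · intro h
          have := Submodule.mem_inf.mpr h
          rwa [key X hX hQX] at this
        · intro h
          exact ⟨hQX h, Submodule.mem_sup_right h⟩
      simp only [this]
      rw [cardSub Q, hQ, pow_one]
    have h2 : (Finset.univ.filter (fun v : V => v ∈ X)).card = q ^ 3 := by
      rw [cardSub X, hdim X hX]
    omega
  have hdisj : ∀ X ∈ s, ∀ Y ∈ s, X ≠ Y → Disjoint (f X) (f Y) := by
    intro X hX Y hY hne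
    rw [Finset.mem_filter] at hX hY
    rw [Finset.disjoint_left]
    intro v hvX hvY
    rw [hf, Finset.mem_filter] at hvX hvY
    have : v ∈ X ⊓ Y := Submodule.mem_inf.mpr ⟨hvX.2.1, hvY.2.1⟩
    rw [key2 X hX.1 Y hY.1 hne hX.2 hY.2] at this
    exact hvX.2.2 (Submodule.mem_sup_right this)
  have hsub : s.biUnion f ⊆ Finset.univ.filter (fun v : V => v ∉ (P ⊔ Q)) := by
    intro v hv
    rw [Finset.mem_biUnion] at hv
    obtain ⟨X, _, hvX⟩ := hv
    rw [hf, Finset.mem_filter] at hvX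
    exact Finset.mem_filter.mpr ⟨Finset.mem_univ v, hvX.2.2⟩
  have hrhs : (Finset.univ.filter (fun v : V => v ∉ (P ⊔ Q))).card = q ^ 7 - q ^ 2 := by
    have := Finset.card_filter_add_card_filter_not
      (s := (Finset.univ : Finset V)) (p := fun v => v ∈ (P ⊔ Q))
    rw [Finset.card_univ, cardV] at this
    have h1 : (Finset.univ.filter (fun v : V => v ∈ (P ⊔ Q))).card = q ^ 2 := by
      rw [cardSub (P ⊔ Q), hPQ2]
    omega
  have hmain : s.card * (q ^ 3 - q) ≤ q ^ 7 - q ^ 2 := by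
    calc s.card * (q ^ 3 - q) = ∑ X ∈ s, (f X).card := by
          rw [Finset.sum_congr rfl hcardf, Finset.sum_const, smul_eq_mul]
      _ = (s.biUnion f).card := (Finset.card_biUnion hdisj).symm
      _ ≤ _ := Finset.card_le_card hsub
    rw [hrhs]
  -- arithmetic
  by_contra hcon
  push_neg at hcon
  have hn : q ^ 4 + q ^ 2 + 1 ≤ s.card := hcon
  have hql : q ≤ q ^ 3 := Nat.le_self_pow (by norm_num) q
  have hq2l : q ^ 2 ≤ q ^ 7 := Nat.pow_le_pow_right (by omega) (by norm_num)
  have h1 : (q ^ 4 + q ^ 2 + 1) * (q ^ 3 - q) ≤ q ^ 7 - q ^ 2 :=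
    le_trans (Nat.mul_le_mul_right _ hn) hmain
  zify [hql, hq2l] at h1
  nlinarith [sq_nonneg q, hq2]
end

section
/- Let q be a prime power, let C₃ be a set of exactly q^8 + q^6 + q^5 + q^3 three-dimensional subspaces (planes) of 𝔽_q^7 such that any two distinct members intersect in a subspace of dimension at most 1, and let P be a one-dimensional subspace (point) of 𝔽_q^7 contained in no member of C₃. Then every one-dimensional subspace Q ≠ P of 𝔽_q^7 is contained in exactly q^4 + q^2 members of C₃. -/
open scoped Classical

/-!
Count the incidences between the points `R ≠ P` and the planes of `C₃`: as `P` lies on no plane,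
they number `#C₃ · [3]_q = ([7]_q - 1)(q⁴ + q²)`, so a point `R ≠ P` lies on `q⁴ + q²` planes on
average. On the other hand, two planes through `R` meet only in `R`, so the `q² + q` further
points of the planes through `R` are pairwise distinct and different from `P`. Hence at most
`([7]_q - 2)/(q² + q) < q⁴ + q² + 1` planes pass through `R`, and an average that is also an
upper bound is attained at every point.
-/

open Finset Module

section Points

variable {F V : Type*} [Field F] [AddCommGroup V] [Module F V] [Finite V]

noncomputable def pointsOn (W : Submodule F V) : Finset (Submodule F V) :=
  (Set.toFinite {R : Submodule F V | R ≤ W ∧ finrank F R = 1}).toFinset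

@[simp]
lemma mem_pointsOn {W R : Submodule F V} : R ∈ pointsOn W ↔ R ≤ W ∧ finrank F R = 1 :=
  Set.Finite.mem_toFinset _

noncomputable def pointsOnEquiv (W : Submodule F V) :
    {R : Submodule F V // R ≤ W ∧ finrank F R = 1} ≃ Projectivization F W :=
  ((Equiv.subtypeSubtypeEquivSubtypeInter _ _).symm.trans
    ((Submodule.MapSubtype.orderIso W).toEquiv.subtypeEquiv fun H =>
      (Submodule.finrank_map_subtype_eq W H).symm ▸ Iff.rfl).symm).trans
    (Projectivization.equivSubmodule F W).symm

lemma card_pointsOn [Finite F] (W : Submodule F V) :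
    #(pointsOn W) = gaussNum (Nat.card F) (finrank F W) := by
  rw [pointsOn, ← Nat.card_eq_card_finite_toFinset]
  exact (Nat.card_congr (pointsOnEquiv W)).trans (Projectivization.card_of_finrank F W rfl)

/-- The subspaces in `T` have pairwise disjoint sets of points other than `R`, none of which
is `P`. -/
lemma card_mul_le_of_pairwise_inf_le [Finite F] {T : Finset (Submodule F V)}
    {R P : Submodule F V} {k : ℕ} (hR : finrank F R = 1) (hP : finrank F P = 1) (hRP : R ≠ P)
    (hdim : ∀ X ∈ T, finrank F X = k) (hRT : ∀ X ∈ T, R ≤ X) (hPT : ∀ X ∈ T, ¬ P ≤ X)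
    (hmeet : (T : Set (Submodule F V)).Pairwise fun X Y => X ⊓ Y ≤ R) :
    #T * (gaussNum (Nat.card F) k - 1) + 2 ≤ gaussNum (Nat.card F) (finrank F V) := by
  have hdisj : (T : Set (Submodule F V)).PairwiseDisjoint fun X => (pointsOn X).erase R := by
    intro X hX Y hY hXY
    refine Finset.disjoint_left.2 fun S hSX hSY => ?_
    simp only [mem_erase, mem_pointsOn] at hSX hSY
    exact hSX.1 (Submodule.eq_of_le_of_finrank_le
      ((le_inf hSX.2.1 hSY.2.1).trans (hmeet hX hY hXY)) (by rw [hR, hSX.2.2]))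
  have hsub : T.biUnion (fun X => (pointsOn X).erase R) ⊆ ((pointsOn ⊤).erase R).erase P := by
    intro S
    simp only [mem_biUnion, mem_erase, mem_pointsOn, le_top, true_and]
    rintro ⟨X, hX, hSR, hSX, hS⟩
    exact ⟨fun hSP => hPT X hX (hSP ▸ hSX), hSR, hS⟩
  have hR_mem : R ∈ pointsOn ⊤ := mem_pointsOn.2 ⟨le_top, hR⟩
  have hP_mem : P ∈ (pointsOn ⊤).erase R := mem_erase.2 ⟨hRP.symm, mem_pointsOn.2 ⟨le_top, hP⟩⟩
  calc #T * (gaussNum (Nat.card F) k - 1) + 2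
      = #(T.biUnion fun X => (pointsOn X).erase R) + 1 + 1 := by
        rw [card_biUnion hdisj, sum_const_nat fun X hX => ?_]
        rw [card_erase_of_mem (mem_pointsOn.2 ⟨hRT X hX, hR⟩), card_pointsOn, hdim X hX]
    _ ≤ #(((pointsOn ⊤).erase R).erase P) + 1 + 1 := by gcongr
    _ = gaussNum (Nat.card F) (finrank F V) := by
      rw [card_erase_add_one hP_mem, card_erase_add_one hR_mem, card_pointsOn, finrank_top]

lemma sum_card_filter_le_eq_sum_gaussNum [Finite F] (C : Finset (Submodule F V))
    {P : Submodule F V} (hPC : ∀ X ∈ C, ¬ P ≤ X) :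
    ∑ R ∈ (pointsOn ⊤).erase P, #{X ∈ C | R ≤ X}
      = ∑ X ∈ C, gaussNum (Nat.card F) (finrank F X) := by
  refine (sum_card_bipartiteAbove_eq_sum_card_bipartiteBelow _).trans (sum_congr rfl fun X hX => ?_)
  rw [← card_pointsOn]
  congr 1
  ext S
  simp only [bipartiteBelow, mem_filter, mem_erase, mem_pointsOn, le_top, true_and]
  exact ⟨fun h => ⟨h.2, h.1.2⟩, fun h => ⟨⟨fun hSP => hPC X hX (hSP ▸ h.1), h.2⟩, h.1⟩⟩

end Points

section PlanesInSevenSpace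

variable {F V : Type*} [Field F] [Finite F] [AddCommGroup V] [Module F V] [Finite V]

lemma card_planes_through_point_le {C : Finset (Submodule F V)} (hV : finrank F V = 7)
    (hdim : ∀ X ∈ C, finrank F X = 3)
    (hint : ∀ X ∈ C, ∀ Y ∈ C, X ≠ Y → finrank F ↥(X ⊓ Y) ≤ 1)
    {P R : Submodule F V} (hP : finrank F P = 1) (hPC : ∀ X ∈ C, ¬ P ≤ X)
    (hR : finrank F R = 1) (hRP : R ≠ P) :
    #{X ∈ C | R ≤ X} ≤ Nat.card F ^ 4 + Nat.card F ^ 2 := by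
  have key := card_mul_le_of_pairwise_inf_le (T := {X ∈ C | R ≤ X}) hR hP hRP
    (fun X hX => hdim X (mem_filter.1 hX).1) (fun X hX => (mem_filter.1 hX).2)
    (fun X hX => hPC X (mem_filter.1 hX).1) fun X hX Y hY hXY => by
      simp only [coe_filter, Set.mem_ofPred_eq] at hX hY
      exact (Submodule.eq_of_le_of_finrank_le (le_inf hX.2 hY.2)
        ((hint X hX.1 Y hY.1 hXY).trans hR.ge)).ge
  rw [hV] at key
  simp only [gaussNum, sum_range_succ, sum_range_zero, pow_zero, pow_one, zero_add, add_assoc,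
    Nat.add_sub_cancel_left] at key
  by_contra! h
  nlinarith [Nat.mul_le_mul_right (Nat.card F + Nat.card F ^ 2) h]

end PlanesInSevenSpace

/-- If C₃ consists of exactly q^8+q^6+q^5+q^3 planes of F_q^7 pairwise intersecting
in dimension at most 1 and the point P lies in no member of C₃, then every point
Q ≠ P lies on exactly q^4 + q^2 members of C₃. -/
theorem planes_through_point_eq (q : ℕ) (F : Type*) [Field F] [Fintype F]
    (hF : Fintype.card F = q) (C₃ : Finset (Submodule F (Fin 7 → F)))
    (hdim : ∀ X ∈ C₃, Module.finrank F ↥X = 3)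
    (hint : ∀ X ∈ C₃, ∀ Y ∈ C₃, X ≠ Y → Module.finrank F ↥(X ⊓ Y) ≤ 1)
    (hcard : C₃.card = q ^ 8 + q ^ 6 + q ^ 5 + q ^ 3)
    (P : Submodule F (Fin 7 → F)) (hP : Module.finrank F ↥P = 1)
    (hPfree : ∀ X ∈ C₃, ¬ P ≤ X) :
    ∀ Q : Submodule F (Fin 7 → F), Module.finrank F ↥Q = 1 → Q ≠ P →
      (C₃.filter fun X => Q ≤ X).card = q ^ 4 + q ^ 2 := by
  intro Q hQ hQP
  rw [← Nat.card_eq_fintype_card] at hF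
  subst hF
  have hV : finrank F (Fin 7 → F) = 7 := finrank_fin_fun F
  have hP_mem : P ∈ pointsOn ⊤ := mem_pointsOn.2 ⟨le_top, hP⟩
  have hbound : ∀ R ∈ (pointsOn ⊤).erase P, #{X ∈ C₃ | R ≤ X} ≤ Nat.card F ^ 4 + Nat.card F ^ 2 :=
    fun R hR => card_planes_through_point_le hV hdim hint hP hPfree
      (mem_pointsOn.1 (mem_of_mem_erase hR)).2 (ne_of_mem_erase hR)
  have htotal : ∑ R ∈ (pointsOn ⊤).erase P, #{X ∈ C₃ | R ≤ X}
      = ∑ _R ∈ (pointsOn ⊤).erase P, (Nat.card F ^ 4 + Nat.card F ^ 2) := by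
    rw [sum_card_filter_le_eq_sum_gaussNum C₃ hPfree, sum_const_nat fun X hX => by rw [hdim X hX],
      sum_const, card_erase_of_mem hP_mem, card_pointsOn, finrank_top, hV, hcard, smul_eq_mul]
    simp only [gaussNum, sum_range_succ, sum_range_zero, pow_zero, pow_one, zero_add, add_assoc,
      Nat.add_sub_cancel_left]
    ring
  exact (sum_eq_sum_iff_of_le hbound).1 htotal Q (mem_erase.2 ⟨hQP, mem_pointsOn.2 ⟨le_top, hQ⟩⟩)
end
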